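/- arXiv:1410.2126 — 2 statements merged into one kernel-verified Lean document; each statement's English description precedes it below -/
import Mathlib

section
/- (Functional equation of the Poincaré series.) For every fractional ideal I of O and every v ∈ ℤ^p, α_{I^∨}(v) = (−1)^{p+1} · α_I(γ − v); equivalently, the Poincaré polynomials P_I(t) = Σ_v α_I(v) t^v satisfy P_{I^∨}(t_1,…,t_p) = (−1)^{p+1} t^γ P_I(1/t_1,…,1/t_p). -/
open scoped Classical

set_option synthInstance.maxHeartbeats 1000000
set_option maxHeartbeats 1000000

noncomputable section

/-- `K`, the total ring of fractions: the product of `p` copies of the field of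
formal Laurent series over `ℂ`. -/
abbrev KK (p : ℕ) : Type := Fin p → LaurentSeries ℂ

lemma algebraMap_component {p : ℕ} (c : ℂ) (i : Fin p) :
    algebraMap ℂ (KK p) c i = HahnSeries.single (0:ℤ) c := by
  rw [Pi.algebraMap_apply, HahnSeries.algebraMap_apply', PowerSeries.algebraMap_apply,
      Algebra.algebraMap_self_apply, HahnSeries.ofPowerSeries_C, HahnSeries.C_apply]

lemma smul_eq_algebraMap_mul {p : ℕ} (c : ℂ) (x : KK p) :
    c • x = algebraMap ℂ (KK p) c * x := by
  funext i
  rw [Pi.smul_apply, Pi.mul_apply, algebraMap_component,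
      HahnSeries.single_zero_mul_eq_smul]

/-- The `t`-adic order of a Laurent series, with `⊤` for the zero series. -/
def valC (g : LaurentSeries ℂ) : WithTop ℤ :=
  if g = 0 then ⊤ else (g.order : WithTop ℤ)

/-- The value vector `val(g) = (val_1 g, …, val_p g)`. -/
def valVec {p : ℕ} (g : KK p) : Fin p → WithTop ℤ := fun i => valC (g i)

/-- The set `t^α·O~` of tuples of Laurent series whose `i`-th component has all
coefficients in degrees below `α i` equal to zero (equivalently, whose `i`-th
component has `t`-adic order at least `α i`), as a `ℂ`-submodule of `K`.
For `α = 0` this is `O~` itself. -/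
def stdMod (p : ℕ) (α : Fin p → ℤ) : Submodule ℂ (KK p) where
  carrier := {g | ∀ i, ∀ j : ℤ, j < α i → (g i).coeff j = 0}
  add_mem' := by
    intro a b ha hb i j hj
    simp [HahnSeries.coeff_add, ha i j hj, hb i j hj]
  zero_mem' := by
    intro i j hj
    simp
  smul_mem' := by
    intro c a ha i j hj
    simp [HahnSeries.coeff_smul, ha i j hj]

/-- The dual `S^∨ = {h ∈ K : h·S ⊆ O}` of a subset `S ⊆ K`, as a
`ℂ`-submodule of `K`. -/
def dualMod {p : ℕ} (O : Subalgebra ℂ (KK p)) (S : Set (KK p)) :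
    Submodule ℂ (KK p) where
  carrier := {h | ∀ g ∈ S, h * g ∈ O}
  add_mem' := by
    intro a b ha hb g hg
    simpa [add_mul] using add_mem (ha g hg) (hb g hg)
  zero_mem' := by
    intro g hg
    simpa using O.zero_mem
  smul_mem' := by
    intro c a ha g hg
    rw [smul_eq_algebraMap_mul, mul_assoc]
    exact O.mul_mem (O.algebraMap_mem c) (ha g hg)

/-- `val(S)`: values of the non-zerodivisors of `K` (elements all of whose
components are nonzero) belonging to `S`. -/
def vals {p : ℕ} (S : Set (KK p)) : Set (Fin p → ℤ) :=
  {v | ∃ g ∈ S, ∀ i, valC (g i) = (v i : WithTop ℤ)}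

/-- `valbar(S)`: values of all elements of `S`. -/
def valsBar {p : ℕ} (S : Set (KK p)) : Set (Fin p → WithTop ℤ) :=
  {v | ∃ g ∈ S, ∀ i, valC (g i) = v i}

/-- `I` is a fractional ideal of `O`: an `O`-stable `ℂ`-submodule of `K` which
is finitely generated over `O` and contains a non-zerodivisor of `K`. -/
def IsFracIdeal {p : ℕ} (O : Subalgebra ℂ (KK p)) (I : Submodule ℂ (KK p)) : Prop :=
  (∀ a ∈ O, ∀ x ∈ I, a * x ∈ I) ∧
  (∃ s : Finset (KK p), (↑s : Set (KK p)) ⊆ (I : Set (KK p)) ∧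
    ∀ x ∈ I, ∃ a : KK p → KK p, (∀ g ∈ s, a g ∈ O) ∧ x = ∑ g ∈ s, a g * g) ∧
  (∃ g ∈ I, ∀ i, g i ≠ 0)

/-- `Δ_i(v, M)`. -/
def DeltaI {p : ℕ} (i : Fin p) (v : Fin p → ℤ) (M : Set (Fin p → ℤ)) :
    Set (Fin p → ℤ) :=
  {α ∈ M | α i = v i ∧ ∀ j, j ≠ i → v j < α j}

/-- `Δ(v, M) = ⋃ i, Δ_i(v, M)`. -/
def DeltaSet {p : ℕ} (v : Fin p → ℤ) (M : Set (Fin p → ℤ)) : Set (Fin p → ℤ) :=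
  ⋃ i : Fin p, DeltaI i v M

/-- `Λ_i(v, M)`. -/
def LamSet {p : ℕ} (i : Fin p) (v : Fin p → ℤ) (M : Set (Fin p → ℤ)) :
    Set (Fin p → ℤ) :=
  {α ∈ M | α i = v i ∧ v ≤ α}

/-- `dim_ℂ (B / A)`: the dimension of the image of `B` in `K ⧸ A`
(which is canonically `B/(A ∩ B)`). -/
def qdim {p : ℕ} (A B : Submodule ℂ (KK p)) : ℕ :=
  Module.finrank ℂ ↥(B.map A.mkQ)

/-- `c_I(v) = dim_ℂ (I_v / I_{v+1})`, where `I_v = {g ∈ I : val g ≥ v}`. -/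
def cI {p : ℕ} (I : Submodule ℂ (KK p)) (v : Fin p → ℤ) : ℕ :=
  qdim (I ⊓ stdMod p (v + 1)) (I ⊓ stdMod p v)

/-- `α_I(v) = Σ_{J ⊆ {1,…,p}} (−1)^{p−|J|} c_I(v − e_J)`. -/
def alphaI {p : ℕ} (I : Submodule ℂ (KK p)) (v : Fin p → ℤ) : ℤ :=
  ∑ J : Finset (Fin p),
    (-1 : ℤ) ^ (p - J.card) * cI I (fun j => v j - if j ∈ J then 1 else 0)

/-- `O` itself, as a `ℂ`-submodule of `K`. -/
def algSubmodule {p : ℕ} (O : Subalgebra ℂ (KK p)) : Submodule ℂ (KK p) where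
  carrier := O
  add_mem' := fun ha hb => O.add_mem ha hb
  zero_mem' := O.zero_mem
  smul_mem' := fun c x hx => by
    rw [smul_eq_algebraMap_mul]
    exact O.mul_mem (O.algebraMap_mem c) hx

/-!
Write `S_w = t^w·O~`. Since `S_w/S_{w+1} ≅ ℂ^p` (leading coefficients), for every subspace `I`
the jumps of `I ∩ S_w` and of `I + S_w` between `w + 1` and `w` add up to `p`. On the dual side,
`I^∨ ∩ S_u = (I + S_{γ-u})^∨` and duality preserves codimension, so
`c_{I^∨}(u) = dim (I + S_{γ-1-u})/(I + S_{γ-u}) = p - c_I(γ - 1 - u)`.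
The constant `p` drops out of the alternating sum over the unit cube (as `p ≥ 1`), and
reindexing the cube by complements produces the sign `(-1)^{p+1}`.
-/

section QuotientDimension

def Submodule.mapMkQEquivRange {R M N : Type*} [Ring R] [AddCommGroup M]
    [Module R M] [AddCommGroup N] [Module R N] {A B : Submodule R M} (f : B →ₗ[R] N)
    (hf : LinearMap.ker f = A.comap B.subtype) : B.map A.mkQ ≃ₗ[R] LinearMap.range f :=
  have hker : LinearMap.ker (A.mkQ ∘ₗ B.subtype) = LinearMap.ker f := by
    rw [hf, LinearMap.ker_comp, Submodule.ker_mkQ]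
  have hrange : LinearMap.range (A.mkQ ∘ₗ B.subtype) = B.map A.mkQ := by
    rw [LinearMap.range_comp, Submodule.range_subtype]
  (LinearEquiv.ofEq _ _ hrange).symm ≪≫ₗ
    (A.mkQ ∘ₗ B.subtype).quotKerEquivRange.symm ≪≫ₗ
    Submodule.quotEquivOfEq _ _ hker ≪≫ₗ f.quotKerEquivRange

variable {p : ℕ}

lemma qdim_inf_left (A B : Submodule ℂ (KK p)) : qdim (A ⊓ B) B = qdim A B := by
  have hf : LinearMap.ker (A.mkQ ∘ₗ B.subtype) = (A ⊓ B).comap B.subtype := by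
    rw [LinearMap.ker_comp, Submodule.ker_mkQ, Submodule.comap_inf,
      Submodule.comap_subtype_self, inf_top_eq]
  have hrange : LinearMap.range (A.mkQ ∘ₗ B.subtype) = B.map A.mkQ := by
    rw [LinearMap.range_comp, Submodule.range_subtype]
  exact ((Submodule.mapMkQEquivRange _ hf).trans (LinearEquiv.ofEq _ _ hrange)).finrank_eq

lemma qdim_sup_left (A B : Submodule ℂ (KK p)) : qdim A (B ⊔ A) = qdim A B := by
  rw [qdim, qdim, Submodule.map_sup, Submodule.mkQ_map_self, sup_bot_eq]

lemma qdim_add {A B C : Submodule ℂ (KK p)} (hAB : A ≤ B) (hBC : B ≤ C)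
    [FiniteDimensional ℂ (C.map A.mkQ)] : qdim A C = qdim A B + qdim B C := by
  set W := C.map A.mkQ
  set π := Submodule.factor hAB
  have hrange : LinearMap.range (π ∘ₗ W.subtype) = C.map B.mkQ := by
    rw [LinearMap.range_comp, Submodule.range_subtype, ← Submodule.map_comp,
      Submodule.factor_comp_mk]
  have hker : LinearMap.ker π = B.map A.mkQ := by
    rw [Submodule.ker_mapQ, Submodule.comap_id]
  have hkerW : LinearMap.ker (π ∘ₗ W.subtype) ≃ₗ[ℂ] B.map A.mkQ := by
    rw [LinearMap.ker_comp, hker]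
    exact Submodule.comapSubtypeEquivOfLe (Submodule.map_mono hBC)
  have := LinearMap.finrank_range_add_finrank_ker (π ∘ₗ W.subtype)
  rw [hrange, hkerW.finrank_eq] at this
  rw [qdim, qdim, qdim, ← this, add_comm]

lemma qdim_eq_qdim_inf_add_qdim_sup (I : Submodule ℂ (KK p)) {A' A : Submodule ℂ (KK p)}
    (h : A' ≤ A) [FiniteDimensional ℂ (A.map A'.mkQ)] :
    qdim A' A = qdim (I ⊓ A') (I ⊓ A) + qdim (I ⊔ A') (I ⊔ A) := by
  have hlow : A ⊓ (I ⊔ A') = (I ⊓ A) ⊔ A' := by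
    rw [inf_comm, sup_comm, sup_inf_assoc_of_le I h, sup_comm]
  have hup : A ⊔ (I ⊔ A') = I ⊔ A := by
    rw [sup_comm, sup_assoc, sup_eq_right.mpr h]
  have hquot : qdim (A ⊓ (I ⊔ A')) A = qdim (I ⊔ A') (I ⊔ A) := by
    rw [inf_comm, qdim_inf_left, ← qdim_sup_left, hup]
  have hsub : qdim A' (A ⊓ (I ⊔ A')) = qdim (I ⊓ A') (I ⊓ A) := by
    rw [hlow, qdim_sup_left, ← qdim_inf_left, ← inf_assoc, inf_comm A', inf_assoc,
      inf_eq_left.mpr h]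
  rw [qdim_add (le_inf h le_sup_right) inf_le_left, hquot, hsub]

end QuotientDimension

section StdMod

variable {p : ℕ}

lemma mem_stdMod_iff {a : Fin p → ℤ} {x : KK p} :
    x ∈ stdMod p a ↔ ∀ i, (a i : WithTop ℤ) ≤ (x i).orderTop := by
  simp only [HahnSeries.le_orderTop_iff_forall, WithTop.coe_lt_coe]
  rfl

lemma stdMod_antitone : Antitone (stdMod p) :=
  fun _ _ hab _ hx i j hj => hx i j (hj.trans_le (hab i))

lemma mul_mem_stdMod {a b : Fin p → ℤ} {x y : KK p} (hx : x ∈ stdMod p a)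
    (hy : y ∈ stdMod p b) : x * y ∈ stdMod p (a + b) := by
  rw [mem_stdMod_iff] at hx hy ⊢
  intro i
  exact (add_le_add (hx i) (hy i)).trans HahnSeries.orderTop_add_le_mul

def tpow (w : Fin p → ℤ) : KK p := fun i => HahnSeries.single (w i) 1

lemma tpow_mem_stdMod (w : Fin p → ℤ) : tpow w ∈ stdMod p w :=
  mem_stdMod_iff.mpr fun _ => HahnSeries.orderTop_single_le

lemma tpow_add (a b : Fin p → ℤ) : tpow (a + b) = tpow a * tpow b := by
  funext i
  simp [tpow, HahnSeries.single_mul_single]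

lemma tpow_zero : tpow (0 : Fin p → ℤ) = 1 := by
  funext i
  exact HahnSeries.single_zero_one

lemma tpow_ne_zero (w : Fin p → ℤ) (i : Fin p) : tpow w i ≠ 0 := by
  simp [tpow]

lemma tpow_mul_tpow_neg (w : Fin p → ℤ) : tpow w * tpow (-w) = 1 := by
  rw [← tpow_add, add_neg_cancel, tpow_zero]

lemma mul_tpow_mem_stdMod_iff {v w : Fin p → ℤ} {x : KK p} :
    x * tpow w ∈ stdMod p (v + w) ↔ x ∈ stdMod p v := by
  refine ⟨fun h => ?_, fun h => mul_mem_stdMod h (tpow_mem_stdMod w)⟩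
  have := mul_mem_stdMod h (tpow_mem_stdMod (-w))
  rwa [mul_assoc, tpow_mul_tpow_neg, mul_one, add_neg_cancel_right] at this

def leadCoeffs (u : Fin p → ℤ) : KK p →ₗ[ℂ] (Fin p → ℂ) :=
  LinearMap.pi fun i => HahnSeries.coeff.linearMap (u i) ∘ₗ LinearMap.proj i

@[simp]
lemma leadCoeffs_apply (u : Fin p → ℤ) (x : KK p) (i : Fin p) :
    leadCoeffs u x i = (x i).coeff (u i) := rfl

def monomials (u : Fin p → ℤ) : (Fin p → ℂ) →ₗ[ℂ] KK p :=
  LinearMap.pi fun i => HahnSeries.single.linearMap (u i) ∘ₗ LinearMap.proj i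

@[simp]
lemma monomials_apply (u : Fin p → ℤ) (c : Fin p → ℂ) (i : Fin p) :
    monomials u c i = HahnSeries.single (u i) (c i) := rfl

lemma monomials_mem_stdMod (u : Fin p → ℤ) (c : Fin p → ℂ) : monomials u c ∈ stdMod p u :=
  mem_stdMod_iff.mpr fun _ => HahnSeries.orderTop_single_le

lemma leadCoeffs_monomials (u : Fin p → ℤ) (c : Fin p → ℂ) :
    leadCoeffs u (monomials u c) = c := by
  funext i
  simp

lemma mem_stdMod_add_one_iff {u : Fin p → ℤ} {x : KK p} :
    x ∈ stdMod p (u + 1) ↔ x ∈ stdMod p u ∧ leadCoeffs u x = 0 := by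
  refine ⟨fun h => ⟨stdMod_antitone (fun i => by simp) h,
    funext fun i => h i (u i) (by simp)⟩, fun ⟨hx, hlead⟩ i j hj => ?_⟩
  rcases (Int.lt_add_one_iff.mp hj).lt_or_eq with hj | rfl
  · exact hx i j hj
  · exact congrFun hlead i

lemma sub_monomials_leadCoeffs_mem {u : Fin p → ℤ} {x : KK p} (hx : x ∈ stdMod p u) :
    x - monomials u (leadCoeffs u x) ∈ stdMod p (u + 1) :=
  mem_stdMod_add_one_iff.mpr ⟨sub_mem hx (monomials_mem_stdMod u _),
    by rw [map_sub, leadCoeffs_monomials, sub_self]⟩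

def stdModQuotEquiv (u : Fin p → ℤ) :
    (stdMod p u).map (stdMod p (u + 1)).mkQ ≃ₗ[ℂ] (Fin p → ℂ) :=
  have hker : LinearMap.ker (leadCoeffs u ∘ₗ (stdMod p u).subtype) =
      (stdMod p (u + 1)).comap (stdMod p u).subtype := by
    ext ⟨x, hx⟩
    simp [mem_stdMod_add_one_iff, hx]
  have hrange : LinearMap.range (leadCoeffs u ∘ₗ (stdMod p u).subtype) = ⊤ :=
    LinearMap.range_eq_top.mpr fun c =>
      ⟨⟨monomials u c, monomials_mem_stdMod u c⟩, leadCoeffs_monomials u c⟩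
  (Submodule.mapMkQEquivRange _ hker).trans (LinearEquiv.ofTop _ hrange)

instance (u : Fin p → ℤ) :
    FiniteDimensional ℂ ((stdMod p u).map (stdMod p (u + 1)).mkQ) :=
  (stdModQuotEquiv u).symm.finiteDimensional

lemma qdim_stdMod_add_one (u : Fin p → ℤ) : qdim (stdMod p (u + 1)) (stdMod p u) = p := by
  rw [qdim, (stdModQuotEquiv u).finrank_eq, Module.finrank_fin_fun]

end StdMod

section Generators

variable {p : ℕ}

def unitMonomials (u : Fin p → ℤ) : Set (KK p) :=
  Set.range fun i => monomials u (Pi.single i 1)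

lemma range_monomials (u : Fin p → ℤ) :
    LinearMap.range (monomials u) = Submodule.span ℂ (unitMonomials u) := by
  rw [LinearMap.range_eq_map, ← (Pi.basisFun ℂ (Fin p)).span_eq, Submodule.map_span,
    ← Set.range_comp]
  simp [unitMonomials, Function.comp_def]

lemma stdMod_le_sup_span_unitMonomials (u : Fin p → ℤ) :
    stdMod p u ≤ stdMod p (u + 1) ⊔ Submodule.span ℂ (unitMonomials u) := by
  intro x hx
  rw [← range_monomials]
  exact Submodule.mem_sup.mpr ⟨_, sub_monomials_leadCoeffs_mem hx, _,
    LinearMap.mem_range_self _ _, sub_add_cancel _ _⟩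

def monomialGens (w : Fin p → ℤ) (n : ℕ) : Finset (KK p) :=
  (Finset.range n ×ˢ Finset.univ).image fun ki =>
    monomials (w + (ki.1 : Fin p → ℤ)) (Pi.single ki.2 1)

lemma unitMonomials_union_subset_monomialGens (w : Fin p → ℤ) (n : ℕ) :
    unitMonomials (w + (n : Fin p → ℤ)) ∪ monomialGens w n ⊆ monomialGens w (n + 1) := by
  rintro _ (⟨i, rfl⟩ | hg)
  · exact Finset.mem_image.mpr ⟨(n, i), by simp, rfl⟩
  · obtain ⟨⟨k, i⟩, hk, rfl⟩ := Finset.mem_image.mp hg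
    exact Finset.mem_image.mpr ⟨(k, i), by simp_all; omega, rfl⟩

lemma stdMod_le_sup_span_monomialGens (w : Fin p → ℤ) (n : ℕ) :
    stdMod p w ≤
      stdMod p (w + (n : Fin p → ℤ)) ⊔ Submodule.span ℂ (monomialGens w n) := by
  induction n with
  | zero => simp
  | succ n ih =>
    calc stdMod p w
        ≤ stdMod p (w + (n : Fin p → ℤ)) ⊔
            Submodule.span ℂ (monomialGens w n) := ih
      _ ≤ stdMod p (w + (n : Fin p → ℤ) + 1) ⊔
            Submodule.span ℂ (unitMonomials (w + (n : Fin p → ℤ)) ∪ monomialGens w n) := by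
        rw [Submodule.span_union, ← sup_assoc]
        exact sup_le_sup_right (stdMod_le_sup_span_unitMonomials _) _
      _ ≤ stdMod p (w + ((n + 1 : ℕ) : Fin p → ℤ)) ⊔
            Submodule.span ℂ (monomialGens w (n + 1)) := by
        rw [Nat.cast_succ, ← add_assoc]
        exact sup_le_sup_left
          (Submodule.span_mono (unitMonomials_union_subset_monomialGens w n)) _

lemma monomialGens_subset_stdMod (w : Fin p → ℤ) (n : ℕ) :
    (monomialGens w n : Set (KK p)) ⊆ stdMod p w := by
  intro g hg
  obtain ⟨⟨k, i⟩, -, rfl⟩ := Finset.mem_image.mp (Finset.mem_coe.mp hg)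
  exact stdMod_antitone (fun j => by simp) (monomials_mem_stdMod _ _)

end Generators

section FractionalIdeals

variable {p : ℕ} {O : Subalgebra ℂ (KK p)}

lemma exists_sum_mul_iff_mem_span {s : Finset (KK p)} {x : KK p} :
    (∃ a : KK p → KK p, (∀ g ∈ s, a g ∈ O) ∧ x = ∑ g ∈ s, a g * g) ↔
      x ∈ Submodule.span O (s : Set (KK p)) := by
  constructor
  · rintro ⟨a, ha, rfl⟩
    exact Submodule.sum_mem _ fun g hg =>
      Submodule.smul_mem _ (⟨a g, ha g hg⟩ : O) (Submodule.subset_span hg)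
  · intro hx
    obtain ⟨f, -, rfl⟩ := Submodule.mem_span_finset.mp hx
    exact ⟨fun g => f g, fun g _ => (f g).2, rfl⟩

lemma isFracIdeal_iff {I : Submodule ℂ (KK p)} :
    IsFracIdeal O I ↔ (∀ a ∈ O, ∀ x ∈ I, a * x ∈ I) ∧
      (∃ s : Finset (KK p), (s : Set (KK p)) ⊆ I ∧
        (I : Set (KK p)) ⊆ Submodule.span O (s : Set (KK p))) ∧
      (∃ g ∈ I, ∀ i, g i ≠ 0) := by
  simp only [IsFracIdeal, exists_sum_mul_iff_mem_span]
  rfl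

lemma span_complex_subset_span (s : Set (KK p)) :
    (Submodule.span ℂ s : Set (KK p)) ⊆ Submodule.span O s := by
  intro x hx
  induction hx using Submodule.span_induction with
  | mem x hx => exact Submodule.subset_span hx
  | zero => exact zero_mem _
  | add x y _ _ hx hy => exact add_mem hx hy
  | smul c x _ hx =>
    rw [smul_eq_algebraMap_mul]
    exact Submodule.smul_mem _ (algebraMap ℂ O c) hx

lemma IsFracIdeal.sup {I J : Submodule ℂ (KK p)} (hI : IsFracIdeal O I) (hJ : IsFracIdeal O J) :
    IsFracIdeal O (I ⊔ J) := by
  obtain ⟨hIstab, ⟨s, hsI, hIs⟩, g, hgI, hg⟩ := isFracIdeal_iff.mp hI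
  obtain ⟨hJstab, ⟨t, htJ, hJt⟩, -⟩ := isFracIdeal_iff.mp hJ
  refine isFracIdeal_iff.mpr ⟨fun a ha x hx => ?_, ⟨s ∪ t, ?_, fun x hx => ?_⟩,
    g, Submodule.mem_sup_left hgI, hg⟩
  · obtain ⟨y, hy, z, hz, rfl⟩ := Submodule.mem_sup.mp hx
    rw [mul_add]
    exact add_mem (Submodule.mem_sup_left (hIstab a ha y hy))
      (Submodule.mem_sup_right (hJstab a ha z hz))
  · rw [Finset.coe_union]
    exact Set.union_subset (hsI.trans (SetLike.coe_mono le_sup_left))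
      (htJ.trans (SetLike.coe_mono le_sup_right))
  · obtain ⟨y, hy, z, hz, rfl⟩ := Submodule.mem_sup.mp hx
    rw [Finset.coe_union, Submodule.span_union]
    exact add_mem (Submodule.mem_sup_left (hIs hy)) (Submodule.mem_sup_right (hJt hz))

lemma stdMod_subset_of_dualMod_eq {c : Fin p → ℤ}
    (hc : dualMod O (stdMod p 0 : Set (KK p)) = stdMod p c) :
    (stdMod p c : Set (KK p)) ⊆ O := by
  intro x hx
  rw [SetLike.mem_coe, ← hc] at hx
  simpa using hx 1 (tpow_zero (p := p) ▸ tpow_mem_stdMod 0)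

lemma isFracIdeal_stdMod (hO : (O : Set (KK p)) ⊆ (stdMod p 0 : Set (KK p)))
    {c : Fin p → ℤ} (hc : dualMod O (stdMod p 0 : Set (KK p)) = stdMod p c)
    (w : Fin p → ℤ) : IsFracIdeal O (stdMod p w) := by
  obtain ⟨m, hm⟩ := Finite.exists_le c
  set n := m.toNat
  have hcn : c ≤ (n : Fin p → ℤ) := fun i => (hm i).trans (Int.self_le_toNat m)
  refine isFracIdeal_iff.mpr ⟨fun a ha x hx => ?_,
    ⟨insert (tpow w) (monomialGens w n), ?_, ?_⟩, tpow w, tpow_mem_stdMod w, tpow_ne_zero w⟩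
  · simpa using mul_mem_stdMod (hO ha) hx
  · rw [Finset.coe_insert]
    exact Set.insert_subset (tpow_mem_stdMod w) (monomialGens_subset_stdMod w n)
  · intro x hx
    obtain ⟨y, hy, z, hz, rfl⟩ :=
      Submodule.mem_sup.mp (stdMod_le_sup_span_monomialGens w n hx)
    have hyO : y * tpow (-w) ∈ O := by
      refine stdMod_subset_of_dualMod_eq hc (stdMod_antitone hcn ?_)
      simpa using mul_mem_stdMod hy (tpow_mem_stdMod (-w))
    have hy_eq : y = (⟨_, hyO⟩ : O) • tpow w := by
      rw [Subalgebra.smul_def, smul_eq_mul, mul_assoc, ← tpow_add, neg_add_cancel, tpow_zero,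
        mul_one]
    rw [Finset.coe_insert]
    refine add_mem ?_ ?_
    · rw [hy_eq]
      exact Submodule.smul_mem _ _ (Submodule.subset_span (Set.mem_insert _ _))
    · exact Submodule.span_mono (Set.subset_insert _ _) (span_complex_subset_span _ hz)

end FractionalIdeals

section Duality

variable {p : ℕ} {O : Subalgebra ℂ (KK p)}

lemma dualMod_sup (I J : Submodule ℂ (KK p)) :
    dualMod O ((I ⊔ J : Submodule ℂ (KK p)) : Set (KK p)) =
      dualMod O (I : Set (KK p)) ⊓ dualMod O (J : Set (KK p)) := by
  ext h
  refine ⟨fun hh => ⟨fun g hg => hh g (Submodule.mem_sup_left hg),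
    fun g hg => hh g (Submodule.mem_sup_right hg)⟩, fun ⟨hI, hJ⟩ g hg => ?_⟩
  obtain ⟨y, hy, z, hz, rfl⟩ := Submodule.mem_sup.mp hg
  rw [mul_add]
  exact O.add_mem (hI y hy) (hJ z hz)

lemma mem_dualMod_stdMod_iff {h : KK p} (w : Fin p → ℤ) :
    h ∈ dualMod O (stdMod p w : Set (KK p)) ↔
      h * tpow w ∈ dualMod O (stdMod p 0 : Set (KK p)) := by
  refine ⟨fun hh g hg => ?_, fun hh g hg => ?_⟩
  · rw [mul_assoc]
    exact hh _ (by simpa using mul_mem_stdMod (tpow_mem_stdMod w) hg)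
  · have := hh (tpow (-w) * g) (by simpa using mul_mem_stdMod (tpow_mem_stdMod (-w)) hg)
    rwa [mul_assoc, ← mul_assoc (tpow w), tpow_mul_tpow_neg, one_mul] at this

lemma dualMod_stdMod {c : Fin p → ℤ} (hc : dualMod O (stdMod p 0 : Set (KK p)) = stdMod p c)
    (w : Fin p → ℤ) : dualMod O (stdMod p w : Set (KK p)) = stdMod p (c - w) := by
  ext h
  rw [mem_dualMod_stdMod_iff, hc, ← mul_tpow_mem_stdMod_iff (v := c - w) (w := w), sub_add_cancel]

lemma cI_dualMod_add_cI (hO : (O : Set (KK p)) ⊆ (stdMod p 0 : Set (KK p)))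
    {c : Fin p → ℤ} (hc : dualMod O (stdMod p 0 : Set (KK p)) = stdMod p c)
    (hcodim : ∀ I J : Submodule ℂ (KK p), IsFracIdeal O I → IsFracIdeal O J → I ≤ J →
      qdim I J = qdim (dualMod O (J : Set (KK p))) (dualMod O (I : Set (KK p))))
    {I : Submodule ℂ (KK p)} (hI : IsFracIdeal O I) (u : Fin p → ℤ) :
    cI (dualMod O (I : Set (KK p))) u + cI I (c - 1 - u) = p := by
  set w := c - 1 - u
  have hdual : ∀ v, dualMod O (I : Set (KK p)) ⊓ stdMod p (c - v) =
      dualMod O ((I ⊔ stdMod p v : Submodule ℂ (KK p)) : Set (KK p)) := fun v => by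
    rw [dualMod_sup, dualMod_stdMod hc]
  have hfrac : ∀ v, IsFracIdeal O (I ⊔ stdMod p v) := fun v =>
    hI.sup (isFracIdeal_stdMod hO hc v)
  have hcI : cI (dualMod O (I : Set (KK p))) u =
      qdim (I ⊔ stdMod p (w + 1)) (I ⊔ stdMod p w) := by
    rw [cI, show u + 1 = c - w by simp [w]; abel, show u = c - (w + 1) by simp only [w]; abel,
      hdual, hdual, hcodim _ _ (hfrac _) (hfrac _)
        (sup_le_sup_left (stdMod_antitone (le_add_of_nonneg_right zero_le_one)) _)]
  rw [hcI, cI, add_comm, ← qdim_eq_qdim_inf_add_qdim_sup I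
    (stdMod_antitone (le_add_of_nonneg_right zero_le_one)), qdim_stdMod_add_one]

end Duality

section AlternatingSums

variable {p : ℕ}

def cubeAltSum (f : (Fin p → ℤ) → ℤ) (v : Fin p → ℤ) : ℤ :=
  ∑ J : Finset (Fin p), (-1 : ℤ) ^ (p - J.card) * f (fun j => v j - if j ∈ J then 1 else 0)

lemma alphaI_eq_cubeAltSum (I : Submodule ℂ (KK p)) (v : Fin p → ℤ) :
    alphaI I v = cubeAltSum (fun u => (cI I u : ℤ)) v := rfl

lemma sum_compl_finset (F : Finset (Fin p) → ℤ) : ∑ J, F Jᶜ = ∑ J, F J :=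
  Equiv.sum_comp (Function.Involutive.toPerm _ compl_involutive) F

lemma neg_one_pow_sub_card_compl (K : Finset (Fin p)) :
    (-1 : ℤ) ^ (p - Kᶜ.card) = (-1) ^ K.card := by
  rw [Finset.card_compl, Fintype.card_fin, Nat.sub_sub_self (card_finset_fin_le K)]

lemma neg_one_pow_card_eq (K : Finset (Fin p)) :
    (-1 : ℤ) ^ K.card = (-1) ^ p * (-1) ^ (p - K.card) := by
  have hp : (-1 : ℤ) ^ p = (-1) ^ (p - K.card) * (-1) ^ K.card := by
    rw [← pow_add, Nat.sub_add_cancel (card_finset_fin_le K)]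
  rw [hp, mul_right_comm, ← pow_add, ← two_mul, pow_mul, neg_one_sq, one_pow, one_mul]

lemma sum_neg_one_pow_sub_card (hp : 1 ≤ p) :
    ∑ J : Finset (Fin p), (-1 : ℤ) ^ (p - J.card) = 0 := by
  have : Nonempty (Fin p) := ⟨⟨0, hp⟩⟩
  rw [← sum_compl_finset]
  simp only [neg_one_pow_sub_card_compl]
  rw [← Finset.powerset_univ,
    Finset.sum_powerset_neg_one_pow_card_of_nonempty Finset.univ_nonempty]

lemma cubeAltSum_reflect (hp : 1 ≤ p) {f g : (Fin p → ℤ) → ℤ} {w : Fin p → ℤ}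
    (h : ∀ u, f u + g (w - u) = p) (v : Fin p → ℤ) :
    cubeAltSum f v = (-1) ^ (p + 1) * cubeAltSum g (w + 1 - v) := by
  have hf : ∀ K : Finset (Fin p), f (fun j => v j - if j ∈ Kᶜ then 1 else 0) =
      p - g (fun j => (w + 1 - v) j - if j ∈ K then 1 else 0) := fun K => by
    rw [eq_sub_iff_add_eq, ← h]
    congr 2
    funext j
    by_cases hj : j ∈ K <;> simp [hj] <;> ring
  simp only [cubeAltSum]
  rw [← sum_compl_finset]
  simp only [hf, mul_sub, Finset.sum_sub_distrib, ← Finset.sum_mul]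
  rw [sum_compl_finset (fun J => (-1 : ℤ) ^ (p - J.card)), sum_neg_one_pow_sub_card hp, zero_mul,
    zero_sub, Finset.mul_sum, ← Finset.sum_neg_distrib]
  refine Finset.sum_congr rfl fun K _ => ?_
  rw [neg_one_pow_sub_card_compl, neg_one_pow_card_eq]
  ring

end AlternatingSums

theorem alphaI_dual_general {p : ℕ} (hp : 1 ≤ p) (O : Subalgebra ℂ (KK p))
    (hO : (O : Set (KK p)) ⊆ (stdMod p 0 : Set (KK p)))
    (γ : Fin p → ℕ)
    (hγ : dualMod O (stdMod p 0 : Set (KK p)) = stdMod p (fun i => (γ i : ℤ)))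
    (hG2 : ∀ I J : Submodule ℂ (KK p), IsFracIdeal O I → IsFracIdeal O J → I ≤ J →
      qdim I J = qdim (dualMod O (J : Set (KK p))) (dualMod O (I : Set (KK p))))
    (I : Submodule ℂ (KK p)) (hI : IsFracIdeal O I) (v : Fin p → ℤ) :
    alphaI (dualMod O (I : Set (KK p))) v =
      (-1 : ℤ) ^ (p + 1) * alphaI I (fun i => (γ i : ℤ) - v i) := by
  have hsym := cubeAltSum_reflect hp (f := fun u => (cI (dualMod O (I : Set (KK p))) u : ℤ))
    (g := fun u => (cI I u : ℤ)) (fun u => by exact_mod_cast cI_dualMod_add_cI hO hγ hG2 hI u) v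
  rw [alphaI_eq_cubeAltSum, alphaI_eq_cubeAltSum, hsym, sub_add_cancel]
  rfl

/-- **Functional equation of the Poincaré series**:
`α_{I^∨}(v) = (−1)^{p+1}·α_I(γ − v)`. -/
theorem alphaI_dual {p : ℕ} (hp : 1 ≤ p) (O : Subalgebra ℂ (KK p))
    (hO : (O : Set (KK p)) ⊆ (stdMod p 0 : Set (KK p)))
    (γ : Fin p → ℕ)
    (hγ : dualMod O (stdMod p 0 : Set (KK p)) = stdMod p (fun i => (γ i : ℤ)))
    (hG1 : ∀ I : Submodule ℂ (KK p), IsFracIdeal O I →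
      dualMod O ((dualMod O (I : Set (KK p)) : Submodule ℂ (KK p)) : Set (KK p)) = I)
    (hG2 : ∀ I J : Submodule ℂ (KK p), IsFracIdeal O I → IsFracIdeal O J → I ≤ J →
      qdim I J = qdim (dualMod O (J : Set (KK p))) (dualMod O (I : Set (KK p))))
    (hG3 : DeltaSet (fun i => (γ i : ℤ) - 1) (vals (O : Set (KK p))) = ∅)
    (I : Submodule ℂ (KK p)) (hI : IsFracIdeal O I) (v : Fin p → ℤ) :
    alphaI (dualMod O (I : Set (KK p))) v =
      (-1 : ℤ) ^ (p + 1) * alphaI I (fun i => (γ i : ℤ) - v i) :=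
  alphaI_dual_general hp O hO γ hγ hG2 I hI v
end
end

section
/- (Values of zero divisors.) Let I be a fractional ideal of O and ν ∈ ℤ^p with t^ν·O~ ⊆ I. Let w ∈ (ℤ∪{∞})^p be such that the set S = {j : w_j = ∞} is nonempty. Then w ∈ valbar(I) if and only if the vector v ∈ ℤ^p defined by v_j = ν_j for j ∈ S and v_j = min(w_j, ν_j) for j ∉ S belongs to val(I). In particular, the set val(I) of values of non-zerodivisors determines the set valbar(I) of values of all elements of I. -/
open scoped Classical

set_option synthInstance.maxHeartbeats 1000000
set_option maxHeartbeats 1000000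

noncomputable section

/-! Adding to `g ∈ I` some `y ∈ t^ν·O~ ⊆ I` leaves the coefficients of each `g_j` below degree
`ν_j` untouched, and a suitable `y` gives `g_j + y_j` any order with the same truncation
`min(·, ν_j)` as that of `g_j`. Hence whether `u ∈ valbar(I)` depends only on `min(u, ν)`, and
`w` and the finite vector `min(w, ν)` have the same truncation. -/

lemma valC_eq_orderTop (g : LaurentSeries ℂ) : valC g = g.orderTop := by
  rw [valC]
  split_ifs with hg
  · simp [hg]
  · exact HahnSeries.order_eq_orderTop_of_ne_zero hg

lemma exists_valC_eq (a : WithTop ℤ) : ∃ z : LaurentSeries ℂ, valC z = a := by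
  induction a with
  | top => exact ⟨0, by simp [valC_eq_orderTop]⟩
  | coe m => exact ⟨HahnSeries.single m 1, by simp [valC_eq_orderTop, HahnSeries.orderTop_single]⟩

lemma coeff_eq_zero_of_lt_valC {g : LaurentSeries ℂ} {j : ℤ} (hj : (j : WithTop ℤ) < valC g) :
    g.coeff j = 0 :=
  HahnSeries.coeff_eq_zero_of_lt_orderTop (valC_eq_orderTop g ▸ hj)

lemma exists_valC_add_eq_of_min_eq (f : LaurentSeries ℂ) (n : ℤ) (a : WithTop ℤ)
    (h : min (valC f) n = min a n) :
    ∃ y : LaurentSeries ℂ, (∀ j < n, y.coeff j = 0) ∧ valC (f + y) = a := by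
  rcases le_or_gt (n : WithTop ℤ) a with hna | han
  · obtain ⟨z, hz⟩ := exists_valC_eq a
    have hnf : (n : WithTop ℤ) ≤ valC f := by
      rw [min_eq_right hna] at h
      exact min_eq_right_iff.mp h
    refine ⟨z - f, fun j hj => ?_, by rw [add_sub_cancel, hz]⟩
    have hj' : (j : WithTop ℤ) < n := WithTop.coe_lt_coe.mpr hj
    rw [HahnSeries.coeff_sub, coeff_eq_zero_of_lt_valC (hz ▸ hj'.trans_le hna),
      coeff_eq_zero_of_lt_valC (hj'.trans_le hnf), sub_zero]
  · refine ⟨0, fun _ _ => HahnSeries.coeff_zero, ?_⟩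
    rw [min_eq_left han.le] at h
    have hfn : valC f < n := (min_lt_iff.mp (h ▸ han)).resolve_right (lt_irrefl _)
    rw [add_zero, ← h, min_eq_left hfn.le]

lemma coe_min_untopD_self (a : WithTop ℤ) (n : ℤ) :
    ((min (a.untopD n) n : ℤ) : WithTop ℤ) = min a n := by
  induction a <;> simp

lemma valsBar_mem_of_min_eq {p : ℕ} {I : Submodule ℂ (KK p)} {ν : Fin p → ℤ}
    (hν : stdMod p ν ≤ I) {u u' : Fin p → WithTop ℤ} (hu : u ∈ valsBar (I : Set (KK p)))
    (h : ∀ j, min (u j) (ν j) = min (u' j) (ν j)) : u' ∈ valsBar (I : Set (KK p)) := by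
  obtain ⟨g, hgI, hg⟩ := hu
  choose y hy hval using fun j => exists_valC_add_eq_of_min_eq (g j) (ν j) (u' j) (hg j ▸ h j)
  exact ⟨g + y, I.add_mem hgI (hν hy), hval⟩

lemma valsBar_mem_iff_of_min_eq {p : ℕ} {I : Submodule ℂ (KK p)} {ν : Fin p → ℤ}
    (hν : stdMod p ν ≤ I) {u u' : Fin p → WithTop ℤ}
    (h : ∀ j, min (u j) (ν j) = min (u' j) (ν j)) :
    u ∈ valsBar (I : Set (KK p)) ↔ u' ∈ valsBar (I : Set (KK p)) :=
  ⟨fun hu => valsBar_mem_of_min_eq hν hu h,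
    fun hu' => valsBar_mem_of_min_eq hν hu' fun j => (h j).symm⟩

theorem valsBar_mem_iff_general {p : ℕ} (I : Submodule ℂ (KK p))
    (ν : Fin p → ℤ) (hν : (stdMod p ν : Set (KK p)) ⊆ (I : Set (KK p)))
    (w : Fin p → WithTop ℤ) :
    w ∈ valsBar (I : Set (KK p)) ↔
      (fun j => min ((w j).untopD (ν j)) (ν j)) ∈ vals (I : Set (KK p)) :=
  valsBar_mem_iff_of_min_eq hν fun j => by rw [coe_min_untopD_self, min_assoc, min_self]

/-- **Values of zero divisors**: for `w` with at least one infinite coordinate,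
`w ∈ valbar(I)` iff the vector obtained by replacing infinite coordinates by
`ν_j` and the others by `min(w_j, ν_j)` lies in `val(I)`.  In particular
`val(I)` determines `valbar(I)`. -/
theorem valsBar_mem_iff {p : ℕ} (hp : 1 ≤ p) (O : Subalgebra ℂ (KK p))
    (hO : (O : Set (KK p)) ⊆ (stdMod p 0 : Set (KK p)))
    (I : Submodule ℂ (KK p)) (hI : IsFracIdeal O I)
    (ν : Fin p → ℤ) (hν : (stdMod p ν : Set (KK p)) ⊆ (I : Set (KK p)))
    (w : Fin p → WithTop ℤ) (hS : ∃ j, w j = ⊤) :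
    w ∈ valsBar (I : Set (KK p)) ↔
      (fun j => min ((w j).untopD (ν j)) (ν j)) ∈ vals (I : Set (KK p)) :=
  valsBar_mem_iff_general I ν hν w
end
end
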